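/- arXiv:math-ph/0408026 — 4 statements merged into one kernel-verified Lean document; each statement's English description precedes it below -/
import Mathlib

section
/- Let U ⊆ ℂ be open and let γ : ℂ → ℂ be holomorphic on U and satisfy the Chazy equation γ''' = 6·γ·γ'' − 9·(γ')² at every point of U. Let a, b, c, d ∈ ℂ with a·d − b·c = 1, and define f(μ) = γ((a·μ + b)/(c·μ + d))·(c·μ + d)⁻² − 2c/(c·μ + d). Then f satisfies the Chazy equation f'''(μ) = 6·f(μ)·f''(μ) − 9·(f'(μ))² at every point μ of the open set V = { μ ∈ ℂ : c·μ + d ≠ 0 and (a·μ + b)/(c·μ + d) ∈ U }. -/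
set_option maxHeartbeats 1000000


open Complex Real

lemma chazy_aux_deriv (a b c d : ℂ) (had : a * d - b * c = 1) (U : Set ℂ)
    (h h' : ℂ → ℂ) (hh : ∀ z ∈ U, HasDerivAt h (h' z) z)
    (n : ℕ) (μ : ℂ) (hq : c * μ + d ≠ 0) (hz : (a * μ + b) / (c * μ + d) ∈ U) :
    HasDerivAt (fun ν => h ((a * ν + b) / (c * ν + d)) * ((c * ν + d) ^ (n + 1))⁻¹)
      (h' ((a * μ + b) / (c * μ + d)) * ((c * μ + d) ^ (n + 3))⁻¹
        - ((n : ℂ) + 1) * c * h ((a * μ + b) / (c * μ + d)) * ((c * μ + d) ^ (n + 2))⁻¹) μ := by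
  have hqd : HasDerivAt (fun ν : ℂ => c * ν + d) c μ := by
    simpa using ((hasDerivAt_id μ).const_mul c).add_const d
  have hnum : HasDerivAt (fun ν : ℂ => a * ν + b) a μ := by
    simpa using ((hasDerivAt_id μ).const_mul a).add_const b
  have hg : HasDerivAt (fun ν => (a * ν + b) / (c * ν + d)) (((c * μ + d) ^ 2)⁻¹) μ := by
    have := hnum.div hqd hq
    have h1 : a * (c * μ + d) - (a * μ + b) * c = 1 := by linear_combination had
    rw [h1, one_div] at this
    exact this
  have hcomp : HasDerivAt (fun ν => h ((a * ν + b) / (c * ν + d)))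
      (h' ((a * μ + b) / (c * μ + d)) * ((c * μ + d) ^ 2)⁻¹) μ := (hh _ hz).comp μ hg
  have hpow : HasDerivAt (fun ν => ((c * ν + d) ^ (n + 1))⁻¹)
      (-(((n : ℂ) + 1) * (c * μ + d) ^ n * c) / ((c * μ + d) ^ (n + 1)) ^ 2) μ := by
    have := (hqd.pow (n + 1)).inv (pow_ne_zero _ hq)
    simp at this
    exact this
  have := hcomp.mul hpow
  refine this.congr_deriv ?_
  generalize h' ((a * μ + b) / (c * μ + d)) = X
  generalize h ((a * μ + b) / (c * μ + d)) = Y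
  field_simp
  ring

/-- The Chazy equation `γ''' = 6·γ·γ'' − 9·(γ')²` is invariant (in the
twisted sense) under `SL(2,ℂ)` transformations: if `γ` is holomorphic on an open set `U`
and satisfies the Chazy equation there, and `f(μ) = γ((aμ+b)/(cμ+d))·(cμ+d)⁻² − 2c/(cμ+d)`
with `ad − bc = 1`, then `f` satisfies the Chazy equation on
`V = {μ | cμ + d ≠ 0 ∧ (aμ+b)/(cμ+d) ∈ U}`. -/
theorem chazy_sl2_invariance
    (U : Set ℂ) (hU : IsOpen U) (γ : ℂ → ℂ)
    (hγ : DifferentiableOn ℂ γ U)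
    (hChazy : ∀ μ ∈ U,
      iteratedDeriv 3 γ μ = 6 * γ μ * iteratedDeriv 2 γ μ - 9 * (deriv γ μ) ^ 2)
    (a b c d : ℂ) (had : a * d - b * c = 1)
    (f : ℂ → ℂ)
    (hf : ∀ μ : ℂ, f μ =
      γ ((a * μ + b) / (c * μ + d)) * ((c * μ + d) ^ 2)⁻¹ - 2 * c / (c * μ + d)) :
    ∀ μ ∈ {μ : ℂ | c * μ + d ≠ 0 ∧ (a * μ + b) / (c * μ + d) ∈ U},
      iteratedDeriv 3 f μ = 6 * f μ * iteratedDeriv 2 f μ - 9 * (deriv f μ) ^ 2 := by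
  -- analyticity of γ and its derivatives
  have hA : AnalyticOnNhd ℂ γ U := hγ.analyticOnNhd hU
  have hA1 : AnalyticOnNhd ℂ (deriv γ) U := hA.deriv
  have hA2 : AnalyticOnNhd ℂ (deriv (deriv γ)) U := hA1.deriv
  have hhγ : ∀ z ∈ U, HasDerivAt γ (deriv γ z) z :=
    fun z hz => (hA z hz).differentiableAt.hasDerivAt
  have hhγ1 : ∀ z ∈ U, HasDerivAt (deriv γ) (deriv (deriv γ) z) z :=
    fun z hz => (hA1 z hz).differentiableAt.hasDerivAt
  have hhγ2 : ∀ z ∈ U, HasDerivAt (deriv (deriv γ)) (deriv (deriv (deriv γ)) z) z :=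
    fun z hz => (hA2 z hz).differentiableAt.hasDerivAt
  -- abbreviations
  set V : Set ℂ := {μ : ℂ | c * μ + d ≠ 0 ∧ (a * μ + b) / (c * μ + d) ∈ U} with hV
  set F1 : ℂ → ℂ := fun ν => deriv γ ((a * ν + b) / (c * ν + d)) * ((c * ν + d) ^ 4)⁻¹
      - 2 * c * γ ((a * ν + b) / (c * ν + d)) * ((c * ν + d) ^ 3)⁻¹
      + 2 * c ^ 2 * ((c * ν + d) ^ 2)⁻¹ with hF1
  set F2 : ℂ → ℂ := fun ν => deriv (deriv γ) ((a * ν + b) / (c * ν + d)) * ((c * ν + d) ^ 6)⁻¹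
      - 6 * c * deriv γ ((a * ν + b) / (c * ν + d)) * ((c * ν + d) ^ 5)⁻¹
      + 6 * c ^ 2 * γ ((a * ν + b) / (c * ν + d)) * ((c * ν + d) ^ 4)⁻¹
      - 4 * c ^ 3 * ((c * ν + d) ^ 3)⁻¹ with hF2
  -- openness of V
  have hVopen : IsOpen V := by
    have hW : IsOpen {μ : ℂ | c * μ + d ≠ 0} := by
      have : Continuous fun μ : ℂ => c * μ + d := by continuity
      exact isOpen_compl_iff.mpr (isClosed_singleton.preimage this)
    have hcont : ContinuousOn (fun μ : ℂ => (a * μ + b) / (c * μ + d))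
        {μ : ℂ | c * μ + d ≠ 0} := by
      apply ContinuousOn.div
      · fun_prop
      · fun_prop
      · exact fun x hx => hx
    have h2 := hcont.isOpen_inter_preimage hW hU
    have : V = {μ : ℂ | c * μ + d ≠ 0} ∩ (fun μ : ℂ => (a * μ + b) / (c * μ + d)) ⁻¹' U := by
      ext ν; simp [hV, Set.mem_inter_iff]
    rw [this]; exact h2
  -- first derivative
  have hd1 : ∀ μ ∈ V, HasDerivAt f (F1 μ) μ := by
    rintro μ ⟨hq, hz⟩
    have k1 := chazy_aux_deriv a b c d had U γ (deriv γ) hhγ 1 μ hq hz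
    have k2 := chazy_aux_deriv a b c d had U (fun _ => 2 * c) (fun _ => 0)
      (fun z _ => hasDerivAt_const z (2 * c)) 0 μ hq hz
    have hsum := k1.sub k2
    have heq : (fun ν => γ ((a * ν + b) / (c * ν + d)) * ((c * ν + d) ^ (1 + 1))⁻¹
        - 2 * c * ((c * ν + d) ^ (0 + 1))⁻¹) =ᶠ[nhds μ] f := by
      filter_upwards with ν
      rw [hf ν]
      ring
    have := hsum.congr_of_eventuallyEq heq.symm
    refine this.congr_deriv ?_
    rw [hF1]
    simp only [← inv_pow, div_eq_mul_inv]
    push_cast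
    ring
  -- second derivative of f (i.e. derivative of F1)
  have hd2 : ∀ μ ∈ V, HasDerivAt F1 (F2 μ) μ := by
    rintro μ ⟨hq, hz⟩
    have k1 := chazy_aux_deriv a b c d had U (deriv γ) (deriv (deriv γ)) hhγ1 3 μ hq hz
    have k2 := chazy_aux_deriv a b c d had U (fun z => 2 * c * γ z)
      (fun z => 2 * c * deriv γ z)
      (fun z hz' => (hhγ z hz').const_mul (2 * c)) 2 μ hq hz
    have k3 := chazy_aux_deriv a b c d had U (fun _ => 2 * c ^ 2) (fun _ => 0)
      (fun z _ => hasDerivAt_const z (2 * c ^ 2)) 1 μ hq hz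
    have hsum := (k1.sub k2).add k3
    have heq : (fun ν => deriv γ ((a * ν + b) / (c * ν + d)) * ((c * ν + d) ^ (3 + 1))⁻¹
        - 2 * c * γ ((a * ν + b) / (c * ν + d)) * ((c * ν + d) ^ (2 + 1))⁻¹
        + 2 * c ^ 2 * ((c * ν + d) ^ (1 + 1))⁻¹) =ᶠ[nhds μ] F1 := by
      filter_upwards with ν
      rw [hF1]
    have := hsum.congr_of_eventuallyEq heq.symm
    refine this.congr_deriv ?_
    rw [hF2]
    simp only [← inv_pow, div_eq_mul_inv]
    push_cast
    ring
  -- third derivative of f (i.e. derivative of F2)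
  have hd3 : ∀ μ ∈ V, HasDerivAt F2
      (deriv (deriv (deriv γ)) ((a * μ + b) / (c * μ + d)) * ((c * μ + d) ^ 8)⁻¹
        - 12 * c * deriv (deriv γ) ((a * μ + b) / (c * μ + d)) * ((c * μ + d) ^ 7)⁻¹
        + 36 * c ^ 2 * deriv γ ((a * μ + b) / (c * μ + d)) * ((c * μ + d) ^ 6)⁻¹
        - 24 * c ^ 3 * γ ((a * μ + b) / (c * μ + d)) * ((c * μ + d) ^ 5)⁻¹
        + 12 * c ^ 4 * ((c * μ + d) ^ 4)⁻¹) μ := by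
    rintro μ ⟨hq, hz⟩
    have k1 := chazy_aux_deriv a b c d had U (deriv (deriv γ)) (deriv (deriv (deriv γ)))
      hhγ2 5 μ hq hz
    have k2 := chazy_aux_deriv a b c d had U (fun z => 6 * c * deriv γ z)
      (fun z => 6 * c * deriv (deriv γ) z)
      (fun z hz' => (hhγ1 z hz').const_mul (6 * c)) 4 μ hq hz
    have k3 := chazy_aux_deriv a b c d had U (fun z => 6 * c ^ 2 * γ z)
      (fun z => 6 * c ^ 2 * deriv γ z)
      (fun z hz' => (hhγ z hz').const_mul (6 * c ^ 2)) 3 μ hq hz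
    have k4 := chazy_aux_deriv a b c d had U (fun _ => 4 * c ^ 3) (fun _ => 0)
      (fun z _ => hasDerivAt_const z (4 * c ^ 3)) 2 μ hq hz
    have hsum := ((k1.sub k2).add k3).sub k4
    have heq : (fun ν => deriv (deriv γ) ((a * ν + b) / (c * ν + d)) * ((c * ν + d) ^ (5 + 1))⁻¹
        - 6 * c * deriv γ ((a * ν + b) / (c * ν + d)) * ((c * ν + d) ^ (4 + 1))⁻¹
        + 6 * c ^ 2 * γ ((a * ν + b) / (c * ν + d)) * ((c * ν + d) ^ (3 + 1))⁻¹
        - 4 * c ^ 3 * ((c * ν + d) ^ (2 + 1))⁻¹) =ᶠ[nhds μ] F2 := by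
      filter_upwards with ν
      rw [hF2]
    have := hsum.congr_of_eventuallyEq heq.symm
    refine this.congr_deriv ?_
    simp only [← inv_pow, div_eq_mul_inv]
    push_cast
    ring
  -- assemble
  rintro μ hμ
  obtain ⟨hq, hz⟩ := hμ
  have e1 : ∀ ν ∈ V, deriv f ν = F1 ν := fun ν hν => (hd1 ν hν).deriv
  have e2 : ∀ ν ∈ V, deriv (deriv f) ν = F2 ν := by
    intro ν hν
    have hev : deriv f =ᶠ[nhds ν] F1 := by
      filter_upwards [hVopen.mem_nhds hν] with x hx using e1 x hx
    rw [hev.deriv_eq]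
    exact (hd2 ν hν).deriv
  have e3 : deriv (deriv (deriv f)) μ =
      deriv (deriv (deriv γ)) ((a * μ + b) / (c * μ + d)) * ((c * μ + d) ^ 8)⁻¹
        - 12 * c * deriv (deriv γ) ((a * μ + b) / (c * μ + d)) * ((c * μ + d) ^ 7)⁻¹
        + 36 * c ^ 2 * deriv γ ((a * μ + b) / (c * μ + d)) * ((c * μ + d) ^ 6)⁻¹
        - 24 * c ^ 3 * γ ((a * μ + b) / (c * μ + d)) * ((c * μ + d) ^ 5)⁻¹
        + 12 * c ^ 4 * ((c * μ + d) ^ 4)⁻¹ := by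
    have hev : deriv (deriv f) =ᶠ[nhds μ] F2 := by
      filter_upwards [hVopen.mem_nhds ⟨hq, hz⟩] with x hx using e2 x hx
    rw [hev.deriv_eq]
    exact (hd3 μ ⟨hq, hz⟩).deriv
  have hch : deriv (deriv (deriv γ)) ((a * μ + b) / (c * μ + d)) =
      6 * γ ((a * μ + b) / (c * μ + d)) * deriv (deriv γ) ((a * μ + b) / (c * μ + d))
        - 9 * (deriv γ ((a * μ + b) / (c * μ + d))) ^ 2 := by
    have := hChazy _ hz
    simpa [iteratedDeriv_succ, iteratedDeriv_zero] using this
  rw [show iteratedDeriv 3 f = deriv (deriv (deriv f)) by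
        simp [iteratedDeriv_succ, iteratedDeriv_zero],
      show iteratedDeriv 2 f = deriv (deriv f) by
        simp [iteratedDeriv_succ, iteratedDeriv_zero],
      e3, e2 μ ⟨hq, hz⟩, e1 μ ⟨hq, hz⟩, hf μ, hch, hF1, hF2]
  simp only [← inv_pow, div_eq_mul_inv]
  ring
end

section
/- Let U ⊆ ℂ be open and nonempty and let f : ℂ → ℂ be holomorphic on U. Define F : ℂ³ → ℂ by F(t₁,t₂,t₃) = −(1/4)·t₁·t₂² + (1/2)·t₁²·t₃ − (πi/32)·t₂⁴·f(2πi·t₃), on the open set D = { (t₁,t₂,t₃) ∈ ℂ³ : 2πi·t₃ ∈ U }. Then F satisfies the WDVV system at every point of D (i.e. F_i·F₁⁻¹·F_j = F_j·F₁⁻¹·F_i for all i, j ∈ {1,2,3} at every point of D; here F₁ is the constant invertible matrix with rows (0,0,1), (0,−1/2,0), (1,0,0)) if and only if f satisfies the Chazy equation f''' = 6·f·f'' − 9·(f')² at every point of U. -/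
set_option maxHeartbeats 1000000


open Complex Real

/-- Partial derivative of a function of three complex variables in the `i`-th direction. -/
noncomputable def pd (i : Fin 3) (F : (Fin 3 → ℂ) → ℂ) : (Fin 3 → ℂ) → ℂ :=
  fun x => fderiv ℂ F x (Pi.single i 1)

/-- The matrix `F_i` with entries `(F_i)_{mn} = ∂³F/∂t_i∂t_m∂t_n`. -/
noncomputable def Fmat (F : (Fin 3 → ℂ) → ℂ) (x : Fin 3 → ℂ) (i : Fin 3) :
    Matrix (Fin 3) (Fin 3) ℂ :=
  Matrix.of fun m n => pd i (pd m (pd n F)) x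

/-- The constant matrix `F₁` with rows `(0,0,1)`, `(0,−1/2,0)`, `(1,0,0)`. -/
noncomputable def M1 : Matrix (Fin 3) (Fin 3) ℂ :=
  !![0, 0, 1; 0, -1/2, 0; 1, 0, 0]

/-- The function `F(t₁,t₂,t₃) = −(1/4)t₁t₂² + (1/2)t₁²t₃ − (πi/32)t₂⁴·f(2πi t₃)`. -/
noncomputable def Fchazy (f : ℂ → ℂ) : (Fin 3 → ℂ) → ℂ :=
  fun t => -(1/4) * t 0 * (t 1) ^ 2 + (1/2) * (t 0) ^ 2 * t 2
    - ((π : ℂ) * I / 32) * (t 1) ^ 4 * f (2 * (π : ℂ) * I * t 2)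

/- ### Auxiliary development -/

noncomputable def cc : ℂ := 2 * π * I
noncomputable def bb : ℂ := π * I / 32

lemma cc_ne : cc ≠ 0 := by
  simp [cc, Complex.I_ne_zero, Real.pi_ne_zero, Complex.ofReal_ne_zero]

noncomputable def pr (i : Fin 3) : (Fin 3 → ℂ) →L[ℂ] ℂ := ContinuousLinearMap.proj i

noncomputable def hh (f : ℂ → ℂ) (k : ℕ) (t : Fin 3 → ℂ) : ℂ :=
  iteratedDeriv k f (cc * t 2)

lemma analytic_iter {f : ℂ → ℂ} {U : Set ℂ} (hU : IsOpen U)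
    (hf : DifferentiableOn ℂ f U) (k : ℕ) :
    AnalyticOnNhd ℂ (iteratedDeriv k f) U := by
  induction k with
  | zero => simpa using hf.analyticOnNhd hU
  | succ n ih => rw [iteratedDeriv_succ]; exact ih.deriv

lemma hasF_hh {f : ℂ → ℂ} {U : Set ℂ} (hU : IsOpen U)
    (hf : DifferentiableOn ℂ f U) (k : ℕ) {t : Fin 3 → ℂ} (ht : cc * t 2 ∈ U) :
    HasFDerivAt (hh f k) ((cc * hh f (k+1) t) • pr 2) t := by
  have hA := analytic_iter hU hf k
  have hd : HasDerivAt (iteratedDeriv k f) (iteratedDeriv (k+1) f (cc * t 2)) (cc * t 2) := by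
    rw [iteratedDeriv_succ]
    exact ((hA _ ht).differentiableAt).hasDerivAt
  have hl : HasFDerivAt (fun x : Fin 3 → ℂ => cc * x 2) (cc • pr 2) t := by
    exact ((pr 2).hasFDerivAt).const_mul cc
  have h2 := hd.comp_hasFDerivAt t hl
  simp only [hh, Function.comp] at h2 ⊢
  exact h2.congr_fderiv (by rw [smul_smul]; congr 1; ring)

lemma pd_eq {G : (Fin 3 → ℂ) → ℂ} {L : (Fin 3 → ℂ) →L[ℂ] ℂ} {t : Fin 3 → ℂ}
    (h : HasFDerivAt G L t) (i : Fin 3) : pd i G t = L (Pi.single i 1) := by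
  rw [pd, h.fderiv]

lemma hx (i : Fin 3) (t : Fin 3 → ℂ) : HasFDerivAt (fun y : Fin 3 → ℂ => y i) (pr i) t :=
  (pr i).hasFDerivAt

lemma pd_congr {G H : (Fin 3 → ℂ) → ℂ} {s : Set (Fin 3 → ℂ)} (hs : IsOpen s)
    {t : Fin 3 → ℂ} (ht : t ∈ s) (h : ∀ x ∈ s, G x = H x) (m : Fin 3) :
    pd m G t = pd m H t := by
  have hev : G =ᶠ[nhds t] H := Filter.eventuallyEq_of_mem (hs.mem_nhds ht) h
  simp only [pd, hev.fderiv_eq]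

noncomputable def Pf (f : ℂ → ℂ) : Fin 3 → (Fin 3 → ℂ) → ℂ :=
  ![fun t => -(1/4) * (t 1)^2 + t 0 * t 2,
    fun t => -(1/2) * t 0 * t 1 - 4 * bb * (t 1)^3 * hh f 0 t,
    fun t => (1/2) * (t 0)^2 - bb * cc * (t 1)^4 * hh f 1 t]

noncomputable def Qf (f : ℂ → ℂ) : Fin 3 → Fin 3 → (Fin 3 → ℂ) → ℂ :=
  ![![fun t => t 2, fun t => -(1/2) * t 1, fun t => t 0],
    ![fun t => -(1/2) * t 1,
      fun t => -(1/2) * t 0 - 12 * bb * (t 1)^2 * hh f 0 t,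
      fun t => -(4 * bb * cc) * (t 1)^3 * hh f 1 t],
    ![fun t => t 0,
      fun t => -(4 * bb * cc) * (t 1)^3 * hh f 1 t,
      fun t => -(bb * cc^2) * (t 1)^4 * hh f 2 t]]

noncomputable def Mx (f : ℂ → ℂ) (t : Fin 3 → ℂ) : Fin 3 → Matrix (Fin 3) (Fin 3) ℂ :=
  ![!![0, 0, 1; 0, -1/2, 0; 1, 0, 0],
    !![0, -1/2, 0;
       -1/2, -24 * bb * t 1 * hh f 0 t, -(12 * bb * cc) * (t 1)^2 * hh f 1 t;
       0, -(12 * bb * cc) * (t 1)^2 * hh f 1 t, -(4 * bb * cc^2) * (t 1)^3 * hh f 2 t],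
    !![1, 0, 0;
       0, -(12 * bb * cc) * (t 1)^2 * hh f 1 t, -(4 * bb * cc^2) * (t 1)^3 * hh f 2 t;
       0, -(4 * bb * cc^2) * (t 1)^3 * hh f 2 t, -(bb * cc^3) * (t 1)^4 * hh f 3 t]]

section levels

variable {f : ℂ → ℂ} {U : Set ℂ} (hU : IsOpen U) (hf : DifferentiableOn ℂ f U)

include hU hf

lemma level1 {t : Fin 3 → ℂ} (ht : cc * t 2 ∈ U) (n : Fin 3) :
    pd n (Fchazy f) t = Pf f n t := by
  have h1 := hx 1 t
  have h0 := hx 0 t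
  have H := (((h0.const_mul (-(1/4):ℂ)).mul (h1.mul h1)).add
      (((h0.mul h0).const_mul ((1/2):ℂ)).mul (hx 2 t))).sub
      ((((h1.mul h1).mul (h1.mul h1)).const_mul bb).mul (hasF_hh hU hf 0 ht))
  have H' : HasFDerivAt (Fchazy f) _ t := H.congr_of_eventuallyEq (by
    filter_upwards with y
    simp only [Fchazy, hh, bb, cc, iteratedDeriv_zero, Pi.mul_apply, Pi.add_apply, Pi.sub_apply, Pi.pow_apply]
    ring)
  rw [pd_eq H']
  fin_cases n <;>
    simp [Pf, pr, Pi.single_apply, Fin.isValue] <;> ring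

lemma level2 {t : Fin 3 → ℂ} (ht : cc * t 2 ∈ U) (m n : Fin 3) :
    pd m (Pf f n) t = Qf f m n t := by
  have h1 := hx 1 t
  have h0 := hx 0 t
  fin_cases n
  · show pd m (Pf f 0) t = Qf f m 0 t
    have H : HasFDerivAt (Pf f 0) _ t :=
      (((h1.mul h1).const_mul (-(1/4):ℂ)).add (h0.mul (hx 2 t))).congr_of_eventuallyEq (by
        filter_upwards with y; simp only [Pf, Matrix.cons_val_zero, Matrix.cons_val_one, Matrix.cons_val_two, Matrix.head_cons, Matrix.tail_cons, Pi.mul_apply, Pi.add_apply, Pi.sub_apply, Pi.pow_apply]; ring)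
    rw [pd_eq H]
    fin_cases m <;> simp [Qf, pr, Pi.single_apply, Fin.isValue] <;> ring
  · show pd m (Pf f 1) t = Qf f m 1 t
    have H : HasFDerivAt (Pf f 1) _ t :=
      (((h0.const_mul (-(1/2):ℂ)).mul h1).sub
        ((((h1.mul h1).mul h1).const_mul (4*bb)).mul (hasF_hh hU hf 0 ht))).congr_of_eventuallyEq
        (by filter_upwards with y; simp only [Pf, Matrix.cons_val_zero, Matrix.cons_val_one, Matrix.cons_val_two, Matrix.head_cons, Matrix.tail_cons, Pi.mul_apply, Pi.add_apply, Pi.sub_apply, Pi.pow_apply]; ring)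
    rw [pd_eq H]
    fin_cases m <;> simp [Qf, pr, Pi.single_apply, Fin.isValue] <;> ring
  · show pd m (Pf f 2) t = Qf f m 2 t
    have H : HasFDerivAt (Pf f 2) _ t :=
      (((h0.mul h0).const_mul ((1/2):ℂ)).sub
        ((((h1.mul h1).mul (h1.mul h1)).const_mul (bb*cc)).mul
          (hasF_hh hU hf 1 ht))).congr_of_eventuallyEq
        (by filter_upwards with y; simp only [Pf, Matrix.cons_val_zero, Matrix.cons_val_one, Matrix.cons_val_two, Matrix.head_cons, Matrix.tail_cons, Pi.mul_apply, Pi.add_apply, Pi.sub_apply, Pi.pow_apply]; ring)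
    rw [pd_eq H]
    fin_cases m <;> simp [Qf, pr, Pi.single_apply, Fin.isValue] <;> ring

lemma level3 {t : Fin 3 → ℂ} (ht : cc * t 2 ∈ U) (i m n : Fin 3) :
    pd i (Qf f m n) t = Mx f t i m n := by
  have h1 := hx 1 t
  have h0 := hx 0 t
  fin_cases m <;> fin_cases n
  · show pd i (Qf f 0 0) t = Mx f t i 0 0
    rw [pd_eq (show HasFDerivAt (Qf f 0 0) (pr 2) t from hx 2 t)]
    fin_cases i <;> simp [Mx, pr, Pi.single_apply, Fin.isValue, Matrix.vecHead, Matrix.vecTail]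
  · show pd i (Qf f 0 1) t = Mx f t i 0 1
    have H : HasFDerivAt (Qf f 0 1) _ t := (h1.const_mul (-(1/2):ℂ)).congr_of_eventuallyEq
      (by filter_upwards with y; simp only [Qf, Matrix.cons_val_zero, Matrix.cons_val_one, Matrix.cons_val_two, Matrix.head_cons, Matrix.tail_cons])
    rw [pd_eq H]
    fin_cases i <;> simp [Mx, pr, Pi.single_apply, Fin.isValue, Matrix.vecHead, Matrix.vecTail] <;> ring
  · show pd i (Qf f 0 2) t = Mx f t i 0 2
    rw [pd_eq (show HasFDerivAt (Qf f 0 2) (pr 0) t from hx 0 t)]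
    fin_cases i <;> simp [Mx, pr, Pi.single_apply, Fin.isValue, Matrix.vecHead, Matrix.vecTail]
  · show pd i (Qf f 1 0) t = Mx f t i 1 0
    have H : HasFDerivAt (Qf f 1 0) _ t := (h1.const_mul (-(1/2):ℂ)).congr_of_eventuallyEq
      (by filter_upwards with y; simp only [Qf, Matrix.cons_val_zero, Matrix.cons_val_one, Matrix.cons_val_two, Matrix.head_cons, Matrix.tail_cons])
    rw [pd_eq H]
    fin_cases i <;> simp [Mx, pr, Pi.single_apply, Fin.isValue, Matrix.vecHead, Matrix.vecTail] <;> ring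
  · show pd i (Qf f 1 1) t = Mx f t i 1 1
    have H : HasFDerivAt (Qf f 1 1) _ t :=
      ((h0.const_mul (-(1/2):ℂ)).sub
        (((h1.mul h1).const_mul (12*bb)).mul (hasF_hh hU hf 0 ht))).congr_of_eventuallyEq
      (by filter_upwards with y; simp only [Qf, Matrix.cons_val_zero, Matrix.cons_val_one, Matrix.cons_val_two, Matrix.head_cons, Matrix.tail_cons, Pi.mul_apply, Pi.add_apply, Pi.sub_apply, Pi.pow_apply]; ring)
    rw [pd_eq H]
    fin_cases i <;> simp [Mx, pr, Pi.single_apply, Fin.isValue, Matrix.vecHead, Matrix.vecTail] <;> ring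
  · show pd i (Qf f 1 2) t = Mx f t i 1 2
    have H : HasFDerivAt (Qf f 1 2) _ t :=
      ((((h1.mul h1).mul h1).const_mul (-(4*bb*cc))).mul
        (hasF_hh hU hf 1 ht)).congr_of_eventuallyEq
      (by filter_upwards with y; simp only [Qf, Matrix.cons_val_zero, Matrix.cons_val_one, Matrix.cons_val_two, Matrix.head_cons, Matrix.tail_cons, Pi.mul_apply, Pi.add_apply, Pi.sub_apply, Pi.pow_apply]; ring)
    rw [pd_eq H]
    fin_cases i <;> simp [Mx, pr, Pi.single_apply, Fin.isValue, Matrix.vecHead, Matrix.vecTail] <;> ring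
  · show pd i (Qf f 2 0) t = Mx f t i 2 0
    rw [pd_eq (show HasFDerivAt (Qf f 2 0) (pr 0) t from hx 0 t)]
    fin_cases i <;> simp [Mx, pr, Pi.single_apply, Fin.isValue, Matrix.vecHead, Matrix.vecTail]
  · show pd i (Qf f 2 1) t = Mx f t i 2 1
    have H : HasFDerivAt (Qf f 2 1) _ t :=
      ((((h1.mul h1).mul h1).const_mul (-(4*bb*cc))).mul
        (hasF_hh hU hf 1 ht)).congr_of_eventuallyEq
      (by filter_upwards with y; simp only [Qf, Matrix.cons_val_zero, Matrix.cons_val_one, Matrix.cons_val_two, Matrix.head_cons, Matrix.tail_cons, Pi.mul_apply, Pi.add_apply, Pi.sub_apply, Pi.pow_apply]; ring)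
    rw [pd_eq H]
    fin_cases i <;> simp [Mx, pr, Pi.single_apply, Fin.isValue, Matrix.vecHead, Matrix.vecTail] <;> ring
  · show pd i (Qf f 2 2) t = Mx f t i 2 2
    have H : HasFDerivAt (Qf f 2 2) _ t :=
      ((((h1.mul h1).mul (h1.mul h1)).const_mul (-(bb*cc^2))).mul
        (hasF_hh hU hf 2 ht)).congr_of_eventuallyEq
      (by filter_upwards with y; simp only [Qf, Matrix.cons_val_zero, Matrix.cons_val_one, Matrix.cons_val_two, Matrix.head_cons, Matrix.tail_cons, Pi.mul_apply, Pi.add_apply, Pi.sub_apply, Pi.pow_apply]; ring)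
    rw [pd_eq H]
    fin_cases i <;> simp [Mx, pr, Pi.single_apply, Fin.isValue, Matrix.vecHead, Matrix.vecTail] <;> ring

omit hf in
lemma Dopen : IsOpen {x : Fin 3 → ℂ | cc * x 2 ∈ U} :=
  hU.preimage (continuous_const.mul (continuous_apply 2))

lemma Fmat_eq {t : Fin 3 → ℂ} (ht : cc * t 2 ∈ U) (i : Fin 3) :
    Fmat (Fchazy f) t i = Mx f t i := by
  have hpdpd : ∀ m n : Fin 3, ∀ x ∈ {x : Fin 3 → ℂ | cc * x 2 ∈ U},
      pd m (pd n (Fchazy f)) x = Qf f m n x := by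
    intro m n x hxm
    rw [pd_congr (Dopen hU) hxm (fun y hy => level1 hU hf hy n) m]
    exact level2 hU hf hxm m n
  ext m n
  show pd i (pd m (pd n (Fchazy f))) t = _
  rw [pd_congr (Dopen hU) ht (hpdpd m n) i]
  exact level3 hU hf ht i m n

end levels

lemma M1_inv : M1⁻¹ = !![0, 0, 1; 0, -2, 0; 1, 0, 0] := by
  apply Matrix.inv_eq_right_inv
  norm_num [M1, Matrix.mul_fin_three, ← Matrix.one_fin_three]

lemma key_commute (w α β γ δ : ℂ) (hδ : δ = 4*β^2 - 4*α*γ) (i j : Fin 3) :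
    (![!![0,0,1;0,-1/2,0;1,0,0],
       !![0,-1/2,0;-1/2,α,β;0,β,γ],
       !![1,0,0;0,β,γ;0,γ,δ]] : Fin 3 → Matrix (Fin 3) (Fin 3) ℂ) i *
      !![0,0,1;0,-2,0;1,0,0] *
      (![!![0,0,1;0,-1/2,0;1,0,0],
       !![0,-1/2,0;-1/2,α,β;0,β,γ],
       !![1,0,0;0,β,γ;0,γ,δ]] : Fin 3 → Matrix (Fin 3) (Fin 3) ℂ) j
    = (![!![0,0,1;0,-1/2,0;1,0,0],
       !![0,-1/2,0;-1/2,α,β;0,β,γ],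
       !![1,0,0;0,β,γ;0,γ,δ]] : Fin 3 → Matrix (Fin 3) (Fin 3) ℂ) j *
      !![0,0,1;0,-2,0;1,0,0] *
      (![!![0,0,1;0,-1/2,0;1,0,0],
       !![0,-1/2,0;-1/2,α,β;0,β,γ],
       !![1,0,0;0,β,γ;0,γ,δ]] : Fin 3 → Matrix (Fin 3) (Fin 3) ℂ) i := by
  fin_cases i <;> fin_cases j <;>
    (ext a b
     fin_cases a <;> fin_cases b <;>
       simp [Matrix.mul_apply, Fin.sum_univ_three, Matrix.vecHead, Matrix.vecTail]
     all_goals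
       first
         | ring1
         | linear_combination (-(1/2 : ℂ)) * hδ
         | linear_combination ((1/2 : ℂ)) * hδ
         | linear_combination hδ
         | linear_combination (-1 : ℂ) * hδ
         | linear_combination (2:ℂ) * hδ
         | linear_combination (-2:ℂ) * hδ)

/-- for `f` holomorphic on a nonempty open set `U ⊆ ℂ`, the function
`F(t₁,t₂,t₃) = −(1/4)t₁t₂² + (1/2)t₁²t₃ − (πi/32)t₂⁴·f(2πi t₃)` satisfies the WDVV system
on `D = {t : 2πi t₃ ∈ U}` if and only if `f` satisfies the Chazy equation on `U`. -/
theorem wdvv_iff_chazy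
    (U : Set ℂ) (hU : IsOpen U) (hne : U.Nonempty)
    (f : ℂ → ℂ) (hf : DifferentiableOn ℂ f U) :
    (∀ t : Fin 3 → ℂ, 2 * (π : ℂ) * I * t 2 ∈ U → ∀ i j : Fin 3,
        Fmat (Fchazy f) t i * M1⁻¹ * Fmat (Fchazy f) t j
          = Fmat (Fchazy f) t j * M1⁻¹ * Fmat (Fchazy f) t i)
    ↔ (∀ μ ∈ U,
        iteratedDeriv 3 f μ = 6 * f μ * iteratedDeriv 2 f μ - 9 * (deriv f μ) ^ 2) := by
  have hcc : ∀ t : Fin 3 → ℂ, cc * t 2 = 2 * (π : ℂ) * I * t 2 := fun t => by rw [cc]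
  constructor
  · intro H μ hμ
    set t : Fin 3 → ℂ := ![0, 1, μ / cc] with htdef
    have ht2 : cc * t 2 = μ := by
      show cc * (μ / cc) = μ
      rw [mul_comm]; exact div_mul_cancel₀ μ cc_ne
    have htU : 2 * (π : ℂ) * I * t 2 ∈ U := by rw [← hcc, ht2]; exact hμ
    have htD : cc * t 2 ∈ U := by rw [ht2]; exact hμ
    have H12 := H t htU 1 2
    rw [Fmat_eq hU hf htD 1, Fmat_eq hU hf htD 2, M1_inv] at H12
    have E := (Matrix.ext_iff.2 H12) 1 2
    have ht1 : t 1 = 1 := rfl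
    simp [Mx, hh, ht1, ht2, Matrix.mul_apply, Fin.sum_univ_three, Matrix.vecHead,
      Matrix.vecTail, iteratedDeriv_one, iteratedDeriv_zero] at E
    have hkey : (π:ℂ)^4 * I^4 / 8 *
        (iteratedDeriv 3 f μ - (6 * f μ * iteratedDeriv 2 f μ - 9 * (deriv f μ)^2)) = 0 := by
      simp only [bb, cc, iteratedDeriv_zero] at E ⊢
      linear_combination E
    have h4 : (I:ℂ)^4 = 1 := by
      rw [show (4:ℕ) = 2*2 from rfl, pow_mul, Complex.I_sq]; ring
    rw [h4] at hkey
    have hc : (π:ℂ)^4 * 1 / 8 ≠ 0 := by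
      simp [Complex.ofReal_ne_zero, Real.pi_ne_zero]
    have hX := (mul_eq_zero.mp hkey).resolve_left hc
    exact sub_eq_zero.mp hX
  · intro H t htU i j
    have ht : cc * t 2 ∈ U := by rw [hcc]; exact htU
    rw [Fmat_eq hU hf ht i, Fmat_eq hU hf ht j, M1_inv]
    have hch : hh f 3 t = 6 * hh f 0 t * hh f 2 t - 9 * (hh f 1 t)^2 := by
      have := H _ ht
      simpa [hh, iteratedDeriv_zero, iteratedDeriv_one] using this
    have hδ : -(bb*cc^3)*(t 1)^4*hh f 3 t
        = 4*(-(12*bb*cc)*(t 1)^2*hh f 1 t)^2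
          - 4*(-24*bb*(t 1)*hh f 0 t)*(-(4*bb*cc^2)*(t 1)^3*hh f 2 t) := by
      simp only [bb, cc] at hch ⊢
      linear_combination (-(((π:ℂ)*I/32)*(2*(π:ℂ)*I)^3)*(t 1)^4) * hch
    simp only [Mx]
    exact key_commute (t 1)
      (-24 * bb * t 1 * hh f 0 t)
      (-(12 * bb * cc) * (t 1)^2 * hh f 1 t)
      (-(4 * bb * cc^2) * (t 1)^3 * hh f 2 t)
      (-(bb * cc^3) * (t 1)^4 * hh f 3 t) hδ i j
end

section
/- Let g be a positive integer, q a symmetric g×g complex matrix, and t₀ ∈ ℂ. Let W : ℂ → ℂ, ωP, ωQ : ℂ → ℂ^g, and 𝐁 : ℂ → (g×g complex matrices) be functions, let wP, wQ ∈ ℂ and o ∈ ℂ^g, and suppose: W has derivative (1/2)·wP·wQ at t₀; for each k, ωP_k has derivative (1/2)·o_k·wP at t₀ and ωQ_k has derivative (1/2)·o_k·wQ at t₀; for all k, l, the entry 𝐁_{kl} has derivative πi·o_k·o_l at t₀; 𝐁(t₀) is symmetric; and 𝐁(t₀) + q is invertible. Set M := (𝐁(t₀) + q)⁻¹. Then the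 function W_q(t) := W(t) − 2πi·Σ_{k,l} ((𝐁(t) + q)⁻¹)_{kl}·ωP_k(t)·ωQ_l(t) has derivative at t₀ equal to (1/2)·( wP − 2πi·Σ_{k,l} M_{kl}·ωP_k(t₀)·o_l )·( wQ − 2πi·Σ_{k,l} M_{kl}·ωQ_k(t₀)·o_l ). -/
open Complex Real Matrix

lemma det_differentiableAt' {n : Type*} [DecidableEq n] [Fintype n]
    {N : ℂ → Matrix n n ℂ} {t₀ : ℂ}
    (h : ∀ i j, DifferentiableAt ℂ (fun t => N t i j) t₀) :
    DifferentiableAt ℂ (fun t => (N t).det) t₀ := by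
  simp only [Matrix.det_apply']
  refine DifferentiableAt.fun_sum fun σ _ => DifferentiableAt.const_mul ?_ _
  exact (HasDerivAt.fun_finsetProd (u := Finset.univ)
    (f := fun i t => N t (σ i) i) (f' := fun i => deriv (fun t => N t (σ i) i) t₀)
    (x := t₀) (fun i _ => (h (σ i) i).hasDerivAt)).differentiableAt

/-- abstract form of the variational formula
`∂ W_q = (1/2)·W_q(P,P_j)·W_q(Q,P_j)` for the deformed bidifferential
`W_q = W − 2πi Σ_{k,l} (B+q)⁻¹_{kl} ω_k(P) ω_l(Q)`, given the Rauch variational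
formulas for `W`, the `ω_k` and the period matrix `B`. -/
theorem deformed_bidifferential_variational_formula
    (g : ℕ) (hg : 0 < g)
    (q : Matrix (Fin g) (Fin g) ℂ) (hq : qᵀ = q)
    (t₀ : ℂ) (W : ℂ → ℂ) (ωP ωQ : ℂ → Fin g → ℂ)
    (B : ℂ → Matrix (Fin g) (Fin g) ℂ)
    (wP wQ : ℂ) (o : Fin g → ℂ)
    (hW : HasDerivAt W ((1/2) * wP * wQ) t₀)
    (hωP : ∀ k, HasDerivAt (fun t => ωP t k) ((1/2) * o k * wP) t₀)
    (hωQ : ∀ k, HasDerivAt (fun t => ωQ t k) ((1/2) * o k * wQ) t₀)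
    (hB : ∀ k l, HasDerivAt (fun t => B t k l) ((π : ℂ) * I * o k * o l) t₀)
    (hsym : (B t₀)ᵀ = B t₀)
    (hinv : IsUnit (B t₀ + q)) :
    HasDerivAt
      (fun t => W t
        - 2 * (π : ℂ) * I * ∑ k, ∑ l, ((B t + q)⁻¹) k l * ωP t k * ωQ t l)
      ((1/2)
        * (wP - 2 * (π : ℂ) * I * ∑ k, ∑ l, ((B t₀ + q)⁻¹) k l * ωP t₀ k * o l)
        * (wQ - 2 * (π : ℂ) * I * ∑ k, ∑ l, ((B t₀ + q)⁻¹) k l * ωQ t₀ k * o l))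
      t₀ := by
  set M : Matrix (Fin g) (Fin g) ℂ := (B t₀ + q)⁻¹ with hM
  -- derivatives of the entries of `B t + q`
  have hA' : ∀ k l, HasDerivAt (fun t => (B t + q) k l)
      ((π : ℂ) * I * o k * o l) t₀ := by
    intro k l
    simpa [Matrix.add_apply] using (hB k l).add_const (q k l)
  have hAdiff : ∀ k l, DifferentiableAt ℂ (fun t => (B t + q) k l) t₀ :=
    fun k l => (hA' k l).differentiableAt
  -- det is differentiable, nonzero at t₀
  have hdet : DifferentiableAt ℂ (fun t => (B t + q).det) t₀ :=
    det_differentiableAt' hAdiff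
  have hdet0 : (B t₀ + q).det ≠ 0 := by
    have := (Matrix.isUnit_iff_isUnit_det _).mp hinv
    exact isUnit_iff_ne_zero.mp this
  -- adjugate entries differentiable
  have hadj : ∀ k l, DifferentiableAt ℂ (fun t => (B t + q).adjugate k l) t₀ := by
    intro k l
    simp only [Matrix.adjugate_apply]
    refine det_differentiableAt' fun i j => ?_
    simp only [Matrix.updateRow_apply]
    by_cases h : i = l
    · simp [h]
    · simpa [h] using hAdiff i j
  -- entries of the inverse are differentiable
  have hfe : ∀ k l, (fun t => ((B t + q)⁻¹) k l)
      = fun t => ((B t + q).det)⁻¹ * (B t + q).adjugate k l := by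
    intro k l
    funext t
    rw [Matrix.inv_def, Matrix.smul_apply, Ring.inverse_eq_inv', smul_eq_mul]
  have hfd : ∀ k l, DifferentiableAt ℂ (fun t => ((B t + q)⁻¹) k l) t₀ := by
    intro k l
    rw [hfe k l]
    exact (hdet.inv hdet0).mul (hadj k l)
  set D : Matrix (Fin g) (Fin g) ℂ :=
    Matrix.of fun k l => deriv (fun t => ((B t + q)⁻¹) k l) t₀ with hD
  have hDd : ∀ k l, HasDerivAt (fun t => ((B t + q)⁻¹) k l) (D k l) t₀ :=
    fun k l => (hfd k l).hasDerivAt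
  -- eventually `(B t + q)⁻¹ * (B t + q) = 1`
  have hev : ∀ᶠ t in nhds t₀, (B t + q)⁻¹ * (B t + q) = 1 := by
    have hne := hdet.continuousAt.eventually_ne hdet0
    filter_upwards [hne] with t ht
    exact Matrix.nonsing_inv_mul _ (isUnit_iff_ne_zero.mpr ht)
  -- differentiate the identity entrywise
  have key : ∀ k l, (∑ m, (D k m * (B t₀ + q) m l
      + M k m * ((π : ℂ) * I * o m * o l))) = 0 := by
    intro k l
    have h1 : HasDerivAt (fun t => ((B t + q)⁻¹ * (B t + q)) k l) 0 t₀ := by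
      refine (hasDerivAt_const t₀ ((1 : Matrix (Fin g) (Fin g) ℂ) k l)).congr_of_eventuallyEq ?_
      filter_upwards [hev] with t ht
      rw [ht]
    have h1' : HasDerivAt (fun t => ∑ m, ((B t + q)⁻¹) k m * (B t + q) m l) 0 t₀ := by
      simpa only [Matrix.mul_apply] using h1
    have h2 : HasDerivAt (fun t => ∑ m, ((B t + q)⁻¹) k m * (B t + q) m l)
        (∑ m, (D k m * (B t₀ + q) m l + M k m * ((π : ℂ) * I * o m * o l))) t₀ :=
      HasDerivAt.fun_sum fun m _ => (hDd k m).mul (hA' m l)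
    exact h2.unique h1'
  -- the matrix `B'` of derivatives of `B`
  set B' : Matrix (Fin g) (Fin g) ℂ := Matrix.of fun k l => (π : ℂ) * I * o k * o l with hB'
  have hDA : D * (B t₀ + q) + M * B' = 0 := by
    ext k l
    have := key k l
    simp only [Matrix.add_apply, Matrix.mul_apply, Matrix.zero_apply, hB', Matrix.of_apply]
    rw [← Finset.sum_add_distrib]
    exact this
  have hAM : (B t₀ + q) * M = 1 := Matrix.mul_nonsing_inv _ ((Matrix.isUnit_iff_isUnit_det _).mp hinv)
  have hDval : D = -(M * B' * M) := by
    calc D = D * ((B t₀ + q) * M) := by rw [hAM, mul_one]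
    _ = (D * (B t₀ + q)) * M := by rw [mul_assoc]
    _ = (-(M * B')) * M := by rw [eq_neg_of_add_eq_zero_left hDA]
    _ = -(M * B' * M) := by rw [neg_mul]
  -- symmetry of M
  have hMsym : ∀ i j, M i j = M j i := by
    intro i j
    have h1 : Mᵀ = M := by
      rw [hM, Matrix.transpose_nonsing_inv, Matrix.transpose_add, hsym, hq]
    conv_lhs => rw [← h1]
    rw [Matrix.transpose_apply]
  -- entry formula for D
  have hDkl : ∀ k l, D k l
      = -((π : ℂ) * I * (∑ m, M k m * o m) * (∑ n, M l n * o n)) := by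
    intro k l
    rw [hDval]
    simp only [Matrix.neg_apply, neg_inj, Matrix.mul_apply, hB', Matrix.of_apply]
    conv_rhs => rw [mul_assoc, Finset.sum_mul_sum]
    simp only [Finset.mul_sum, Finset.sum_mul]
    rw [Finset.sum_comm]
    refine Finset.sum_congr rfl fun m _ => Finset.sum_congr rfl fun n _ => ?_
    rw [hMsym n l]
    ring
  -- main derivative
  have hsum : HasDerivAt (fun t => ∑ k, ∑ l, ((B t + q)⁻¹) k l * ωP t k * ωQ t l)
      (∑ k, ∑ l, ((D k l * ωP t₀ k + M k l * ((1/2) * o k * wP)) * ωQ t₀ l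
        + M k l * ωP t₀ k * ((1/2) * o l * wQ))) t₀ :=
    HasDerivAt.fun_sum fun k _ => HasDerivAt.fun_sum fun l _ =>
      ((hDd k l).mul (hωP k)).mul (hωQ l)
  have final := hW.sub (hsum.const_mul (2 * (π : ℂ) * I))
  refine final.congr_deriv ?_
  -- now the scalar identity
  set P : Fin g → ℂ := ωP t₀
  set Q : Fin g → ℂ := ωQ t₀
  set a : ℂ := ∑ k, ∑ l, M k l * P k * o l with ha
  set b : ℂ := ∑ k, ∑ l, M k l * Q k * o l with hb
  have e1 : (∑ k, (∑ m, M k m * o m) * P k) = a := by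
    rw [ha]
    refine Finset.sum_congr rfl fun k _ => ?_
    rw [Finset.sum_mul]
    exact Finset.sum_congr rfl fun m _ => by ring
  have e2 : (∑ l, (∑ n, M l n * o n) * Q l) = b := by
    rw [hb]
    refine Finset.sum_congr rfl fun l _ => ?_
    rw [Finset.sum_mul]
    exact Finset.sum_congr rfl fun n _ => by ring
  have S1 : (∑ k, ∑ l, D k l * P k * Q l) = -((π : ℂ) * I * a * b) := by
    have h : ∀ k l : Fin g, D k l * P k * Q l
        = -((π : ℂ) * I * (((∑ m, M k m * o m) * P k) * ((∑ n, M l n * o n) * Q l))) := by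
      intro k l; rw [hDkl k l]; ring
    simp only [h, Finset.sum_neg_distrib]
    rw [neg_inj, mul_assoc, Finset.sum_mul_sum]
    simp only [Finset.mul_sum]
    refine Finset.sum_congr rfl fun k _ => Finset.sum_congr rfl fun l _ => ?_
    have h1 : (∑ m, M k m * o m) * P k = ∑ m, M k m * P k * o m := by
      rw [Finset.sum_mul]
      exact Finset.sum_congr rfl fun m _ => by ring
    have h2 : (∑ n, M l n * o n) * Q l = ∑ n, M l n * Q l * o n := by
      rw [Finset.sum_mul]
      exact Finset.sum_congr rfl fun n _ => by ring
    rw [h1, h2]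
    simp only [Finset.mul_sum]
  have S2 : (∑ k, ∑ l, M k l * (1/2 * o k * wP) * Q l) = 1/2 * wP * b := by
    rw [hb]
    simp only [Finset.mul_sum]
    rw [Finset.sum_comm]
    refine Finset.sum_congr rfl fun k _ => Finset.sum_congr rfl fun l _ => ?_
    rw [hMsym l k]
    ring
  have S3 : (∑ k, ∑ l, M k l * P k * (1/2 * o l * wQ)) = 1/2 * wQ * a := by
    rw [ha]
    simp only [Finset.mul_sum]
    refine Finset.sum_congr rfl fun k _ => Finset.sum_congr rfl fun l _ => by ring
  have split : (∑ k, ∑ l, ((D k l * P k + M k l * (1/2 * o k * wP)) * Q l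
        + M k l * P k * (1/2 * o l * wQ)))
      = (∑ k, ∑ l, D k l * P k * Q l) + (∑ k, ∑ l, M k l * (1/2 * o k * wP) * Q l)
        + (∑ k, ∑ l, M k l * P k * (1/2 * o l * wQ)) := by
    simp only [add_mul, Finset.sum_add_distrib]
  rw [split, S1, S2, S3]
  ring
end

section
/- Let g be a positive integer, C a constant symmetric g×g complex matrix, t₀ ∈ ℂ, o ∈ ℂ^g, and 𝐁 : ℂ → (g×g complex matrices) a function such that 𝐁(t₀) is symmetric, C − 𝐁(t₀) is invertible, and for all k, l the entry 𝐁_{kl} has derivative πi·o_k·o_l at t₀. Set ṽ := C·(C − 𝐁(t₀))⁻¹·o ∈ ℂ^g. Then for all k, l the (k,l)-entry of the matrix-valued function t ↦ C·(C − 𝐁(t))⁻¹·𝐁(t) has derivative at t₀ equal to πi·ṽ_k·ṽ_l. -/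
open Complex Real Matrix

private lemma aux_det_diff {n : ℕ} (A : ℂ → Matrix (Fin n) (Fin n) ℂ) (t₀ : ℂ)
    (h : ∀ k l, DifferentiableAt ℂ (fun t => A t k l) t₀) :
    DifferentiableAt ℂ (fun t => (A t).det) t₀ := by
  simp only [Matrix.det_apply]
  apply DifferentiableAt.fun_sum
  intro σ _
  simp only [Units.smul_def, zsmul_eq_mul]
  exact ((DifferentiableAt.fun_finsetProd fun i _ => h (σ i) i)).const_mul _

/-- abstract form of the variational formula
`∂_{λ_j} ℬ^Ω_{kl} = πi·v_k(P_j)·v_l(P_j)` for `ℬ^Ω = B̄·(B̄ − B)⁻¹·B`: here `C` plays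
the role of the constant matrix `B̄`, `B t` the holomorphically varying period matrix
with Rauch derivative `πi·o_k·o_l`, and `ṽ = C·(C − B t₀)⁻¹·o`. -/
theorem bOmega_variational_formula
    (g : ℕ) (hg : 0 < g)
    (C : Matrix (Fin g) (Fin g) ℂ) (hC : Cᵀ = C)
    (t₀ : ℂ) (o : Fin g → ℂ)
    (B : ℂ → Matrix (Fin g) (Fin g) ℂ)
    (hsym : (B t₀)ᵀ = B t₀)
    (hinv : IsUnit (C - B t₀))
    (hB : ∀ k l, HasDerivAt (fun t => B t k l) ((π : ℂ) * I * o k * o l) t₀) :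
    ∀ k l, HasDerivAt (fun t => (C * (C - B t)⁻¹ * B t) k l)
      ((π : ℂ) * I * (C * (C - B t₀)⁻¹).mulVec o k * (C * (C - B t₀)⁻¹).mulVec o l)
      t₀ := by
  have hdetU : IsUnit (C - B t₀).det := (Matrix.isUnit_iff_isUnit_det _).mp hinv
  have hdet0 : (C - B t₀).det ≠ 0 := hdetU.ne_zero
  set D : Matrix (Fin g) (Fin g) ℂ := Matrix.of fun k l => (π : ℂ) * I * o k * o l with hD
  have hMent : ∀ k l, HasDerivAt (fun t => (C - B t) k l) (-(D k l)) t₀ := by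
    intro k l
    have := (hB k l).const_sub (C k l)
    simpa [Matrix.sub_apply, hD] using this
  have hMdiff : ∀ k l, DifferentiableAt ℂ (fun t => (C - B t) k l) t₀ :=
    fun k l => (hMent k l).differentiableAt
  have hdetdiff : DifferentiableAt ℂ (fun t => (C - B t).det) t₀ :=
    aux_det_diff _ _ hMdiff
  have hadj : ∀ k l, DifferentiableAt ℂ (fun t => (C - B t).adjugate k l) t₀ := by
    intro k l
    simp only [Matrix.adjugate_apply]
    apply aux_det_diff
    intro i j
    by_cases hil : i = l
    · simp [Matrix.updateRow_apply, hil]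
    · simpa [Matrix.updateRow_apply, hil] using hMdiff i j
  have hGdiff : ∀ k l, DifferentiableAt ℂ (fun t => (C - B t)⁻¹ k l) t₀ := by
    intro k l
    have heq : (fun t => (C - B t)⁻¹ k l)
        = fun t => ((C - B t).det)⁻¹ * (C - B t).adjugate k l := by
      funext t
      rw [Matrix.inv_def]
      simp [Ring.inverse_eq_inv', Matrix.smul_apply, smul_eq_mul]
    rw [heq]
    exact (hdetdiff.inv hdet0).mul (hadj k l)
  set N : Matrix (Fin g) (Fin g) ℂ := (C - B t₀)⁻¹ with hN
  have hMN : (C - B t₀) * N = 1 := Matrix.mul_nonsing_inv _ hdetU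
  have hNM : N * (C - B t₀) = 1 := Matrix.nonsing_inv_mul _ hdetU
  set G' : Matrix (Fin g) (Fin g) ℂ :=
    Matrix.of fun k l => deriv (fun t => (C - B t)⁻¹ k l) t₀ with hG'def
  have hG' : ∀ k l, HasDerivAt (fun t => (C - B t)⁻¹ k l) (G' k l) t₀ :=
    fun k l => (hGdiff k l).hasDerivAt
  have hev : ∀ᶠ t in nhds t₀, (C - B t) * (C - B t)⁻¹ = 1 := by
    filter_upwards [hdetdiff.continuousAt.eventually_ne hdet0] with t ht
    exact Matrix.mul_nonsing_inv _ (isUnit_iff_ne_zero.mpr ht)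
  have hkey : ∀ k l, (-(D * N) + (C - B t₀) * G') k l = 0 := by
    intro k l
    have h1 : HasDerivAt (fun t => ((C - B t) * (C - B t)⁻¹) k l)
        ((-(D * N) + (C - B t₀) * G') k l) t₀ := by
      have hsum : HasDerivAt (fun t => ∑ m, (C - B t) k m * (C - B t)⁻¹ m l)
          (∑ m, (-(D k m) * N m l + (C - B t₀) k m * G' m l)) t₀ :=
        HasDerivAt.fun_sum fun m _ => (hMent k m).mul (hG' m l)
      have hfun : (fun t => ((C - B t) * (C - B t)⁻¹) k l)
          = fun t => ∑ m, (C - B t) k m * (C - B t)⁻¹ m l := by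
        funext t; rw [Matrix.mul_apply]
      have hvalsum : (-(D * N) + (C - B t₀) * G') k l
          = ∑ m, (-(D k m) * N m l + (C - B t₀) k m * G' m l) := by
        simp [Matrix.add_apply, Matrix.neg_apply, Matrix.mul_apply, Finset.sum_add_distrib,
          neg_mul, Finset.sum_neg_distrib]
      rw [hfun, hvalsum]
      exact hsum
    have h2 : HasDerivAt (fun t => ((C - B t) * (C - B t)⁻¹) k l) 0 t₀ := by
      apply (hasDerivAt_const t₀ ((1 : Matrix (Fin g) (Fin g) ℂ) k l)).congr_of_eventuallyEq
      filter_upwards [hev] with t ht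
      rw [ht]
    exact h1.unique h2
  have hmat : (C - B t₀) * G' = D * N := by
    ext k l
    have h := hkey k l
    rw [Matrix.add_apply, Matrix.neg_apply] at h
    linear_combination h
  have hG'eq : G' = N * D * N := by
    calc G' = 1 * G' := (one_mul _).symm
      _ = N * (C - B t₀) * G' := by rw [hNM]
      _ = N * ((C - B t₀) * G') := by rw [mul_assoc]
      _ = N * (D * N) := by rw [hmat]
      _ = N * D * N := by rw [mul_assoc]
  have hNT : Nᵀ = N := by
    calc Nᵀ = ((C - B t₀)ᵀ)⁻¹ := Matrix.transpose_nonsing_inv _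
      _ = N := by rw [Matrix.transpose_sub, hC, hsym]
  have hE : (N * B t₀ + 1)ᵀ = C * N := by
    rw [Matrix.transpose_add, Matrix.transpose_mul, hsym, hNT, Matrix.transpose_one]
    have h3 : B t₀ * N + 1 = (B t₀ + (C - B t₀)) * N := by rw [add_mul, hMN]
    rw [h3]
    congr 1
    abel
  intro k l
  have hfin : HasDerivAt (fun t => (C * (C - B t)⁻¹ * B t) k l)
      ((C * G' * B t₀ + C * N * D) k l) t₀ := by
    have hsum : HasDerivAt
        (fun t => ∑ m, (∑ n, C k n * (C - B t)⁻¹ n m) * B t m l)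
        (∑ m, ((∑ n, C k n * G' n m) * B t₀ m l
          + (∑ n, C k n * N n m) * (D m l))) t₀ := by
      apply HasDerivAt.fun_sum
      intro m _
      have hin : HasDerivAt (fun t => ∑ n, C k n * (C - B t)⁻¹ n m)
          (∑ n, C k n * G' n m) t₀ :=
        HasDerivAt.fun_sum fun n _ => (hG' n m).const_mul (C k n)
      have := hin.mul (hB m l)
      exact this
    have hfun : (fun t => (C * (C - B t)⁻¹ * B t) k l)
        = fun t => ∑ m, (∑ n, C k n * (C - B t)⁻¹ n m) * B t m l := by
      funext t; simp [Matrix.mul_apply]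
    have hval : (C * G' * B t₀ + C * N * D) k l
        = ∑ m, ((∑ n, C k n * G' n m) * B t₀ m l
          + (∑ n, C k n * N n m) * (D m l)) := by
      simp [Matrix.add_apply, Matrix.mul_apply, Finset.sum_add_distrib]
    rw [hfun, hval]
    exact hsum
  have hfinal : (C * G' * B t₀ + C * N * D) k l
      = (π : ℂ) * I * (C * N).mulVec o k * (C * N).mulVec o l := by
    rw [hG'eq]
    have h1 : C * (N * D * N) * B t₀ + C * N * D = (C * N) * D * (N * B t₀ + 1) := by
      noncomm_ring
    rw [h1]
    set A := C * N with hA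
    set E := N * B t₀ + 1 with hEdef
    have h2 : (A * D * E) k l
        = (π : ℂ) * I * A.mulVec o k * ((Eᵀ).mulVec o l) := by
      simp only [Matrix.mul_apply, Matrix.mulVec, dotProduct, Matrix.transpose_apply,
        hD, Matrix.of_apply, Finset.sum_mul, Finset.mul_sum]
      apply Finset.sum_congr rfl
      intro n _
      apply Finset.sum_congr rfl
      intro m _
      ring
    rw [h2, hE]
  rw [hfinal] at hfin
  exact hfin
end
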